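/- Let Ω ⊂ ℝ² be bounded open, w ∈ C¹ with ‖∇w‖_∞ ≤ ε, and let v, w satisfy (weakly, with zero Dirichlet boundary values) ∇·(∇w/√(1+|∇w|²)) = p and Δv = p. Then ∫_Ω |∇(w − v)|² dx = ∫_Ω (1 − 1/√(1+|∇w|²)) ∇w · ∇(w − v) dx, and consequently ‖∇(w − v)‖_{L²(Ω)} ≤ (ε²/2) · ε · |Ω|^{1/2} = (ε³/2)|Ω|^{1/2}. -/

import Mathlib

/-!
Testing both weak equations with `φ = w - v` and subtracting gives the identity, because
`|∇(w - v)|² = ∇w·∇(w - v) - ∇v·∇(w - v)`. Since `0 ≤ 1 - 1/√(1 + t) ≤ t/2` and `|∇w| ≤ ε`,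
its right-hand side is at most `(ε³/2) ∫ |∇(w - v)|`, and Cauchy–Schwarz bounds this by
`(ε³/2) |Ω|^{1/2} ‖∇(w - v)‖_{L²}`.

Nothing makes `∇v` square integrable, and a non-integrable function has Bochner integral `0`.
When `|∇(w - v)|²` is not integrable, testing also with `φ = w` and `φ = v` forces
`∫ |∇w|²/√(1 + |∇w|²) = 0`, so `∇w = 0` a.e. and both sides of the identity vanish.
-/

open Matrix MeasureTheory

noncomputable def grad (u : (Fin 2 → ℝ) → ℝ) (x : Fin 2 → ℝ) : Fin 2 → ℝ :=
  fun i => fderiv ℝ u x (Pi.single i 1)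

lemma measurable_grad (u : (Fin 2 → ℝ) → ℝ) : Measurable (grad u) :=
  measurable_pi_lambda _ fun _ => measurable_fderiv_apply_const ℝ u _

lemma grad_sub {u v : (Fin 2 → ℝ) → ℝ} (hu : Differentiable ℝ u) (hv : Differentiable ℝ v)
    (x : Fin 2 → ℝ) : grad (u - v) x = grad u x - grad v x := by
  ext i
  simp only [grad, Pi.sub_apply, fderiv_sub (hu x) (hv x), _root_.sub_apply]

namespace Real

lemma one_div_sqrt_one_add_le_one {t : ℝ} (ht : 0 ≤ t) : 1 / √(1 + t) ≤ 1 := by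
  rw [div_le_one (by positivity)]
  exact one_le_sqrt.mpr (by linarith)

lemma one_sub_one_div_sqrt_one_add_le {t : ℝ} (ht : 0 ≤ t) : 1 - 1 / √(1 + t) ≤ t / 2 := by
  have hs : 1 ≤ √(1 + t) := one_le_sqrt.mpr (by linarith)
  have hsq : √(1 + t) ^ 2 = 1 + t := sq_sqrt (by linarith)
  rw [one_sub_div (by positivity), div_le_iff₀ (by positivity)]
  nlinarith

lemma sqrt_le_of_le_mul_sqrt {a c : ℝ} (hc : 0 ≤ c) (h : a ≤ c * √a) : √a ≤ c := by
  rcases (sqrt_nonneg a).eq_or_lt with h0 | hpos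
  · rw [← h0]; exact hc
  · refine le_of_mul_le_mul_right ?_ hpos
    rwa [mul_self_sqrt (sqrt_pos.mp hpos).le]

end Real

section DotProduct

variable {ι : Type*} [Fintype ι]

lemma dotProduct_self_nonneg_real (u : ι → ℝ) : 0 ≤ u ⬝ᵥ u := by
  simpa using dotProduct_star_self_nonneg u

lemma abs_dotProduct_le_sqrt_mul_sqrt (u v : ι → ℝ) : |u ⬝ᵥ v| ≤ √(u ⬝ᵥ u) * √(v ⬝ᵥ v) := by
  have h := abs_real_inner_le_norm (WithLp.toLp 2 v : EuclideanSpace ℝ ι) (WithLp.toLp 2 u)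
  rw [norm_eq_sqrt_real_inner, norm_eq_sqrt_real_inner, mul_comm] at h
  simpa only [EuclideanSpace.inner_toLp_toLp, star_trivial] using h

end DotProduct

section EnergyEstimate

variable {α ι : Type*} [MeasurableSpace α] [Fintype ι] {μ : Measure α}
  {a b : α → ι → ℝ} {k : α → ℝ} {ε δ : ℝ}

lemma integral_le_sqrt_integral_sq_mul_sqrt_measureReal [IsFiniteMeasure μ] {f : α → ℝ}
    (hf₀ : 0 ≤ᵐ[μ] f) (hf : MemLp f 2 μ) :
    ∫ x, f x ∂μ ≤ √(∫ x, f x ^ 2 ∂μ) * √(μ.real Set.univ) := by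
  have h := integral_mul_le_Lp_mul_Lq_of_nonneg Real.HolderConjugate.two_two hf₀
    (ae_of_all _ fun _ => zero_le_one) (by simpa using hf) (by simpa using memLp_const (1 : ℝ))
  simpa [Real.sqrt_eq_rpow] using h

lemma memLp_sqrt_dotProduct_self {c : α → ι → ℝ} (hc : AEStronglyMeasurable c μ)
    (hcc : Integrable (fun x => c x ⬝ᵥ c x) μ) : MemLp (fun x => √(c x ⬝ᵥ c x)) 2 μ :=
  (memLp_two_iff_integrable_sq (by fun_prop)).mpr <| by
    simpa only [Real.sq_sqrt (dotProduct_self_nonneg_real _)] using hcc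

lemma integrable_dotProduct_of_sqrt_le [IsFiniteMeasure μ] {c : α → ι → ℝ}
    (ha : AEStronglyMeasurable a μ) (hc : AEStronglyMeasurable c μ)
    (haε : ∀ᵐ x ∂μ, √(a x ⬝ᵥ a x) ≤ ε) (hcc : Integrable (fun x => c x ⬝ᵥ c x) μ) :
    Integrable (fun x => a x ⬝ᵥ c x) μ := by
  refine (((memLp_sqrt_dotProduct_self hc hcc).integrable one_le_two).const_mul ε).mono'
    (by fun_prop) ?_
  filter_upwards [haε] with x hx
  exact (abs_dotProduct_le_sqrt_mul_sqrt _ _).trans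
    (mul_le_mul_of_nonneg_right hx (Real.sqrt_nonneg _))

lemma integrable_dotProduct_self_of_sqrt_le [IsFiniteMeasure μ] (ha : AEStronglyMeasurable a μ)
    (haε : ∀ᵐ x ∂μ, √(a x ⬝ᵥ a x) ≤ ε) : Integrable (fun x => a x ⬝ᵥ a x) μ := by
  refine Integrable.of_bound (by fun_prop) (ε ^ 2) ?_
  filter_upwards [haε] with x hx
  rw [Real.norm_of_nonneg (dotProduct_self_nonneg_real _)]
  exact (Real.sqrt_le_iff.mp hx).2

lemma integral_dotProduct_sub_self_eq [IsFiniteMeasure μ] (ha : AEStronglyMeasurable a μ)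
    (hb : AEStronglyMeasurable b μ) (hk : AEStronglyMeasurable k μ) (hk1 : ∀ᵐ x ∂μ, ‖k x‖ ≤ 1)
    (haε : ∀ᵐ x ∂μ, √(a x ⬝ᵥ a x) ≤ ε)
    (hcc : Integrable (fun x => (a x - b x) ⬝ᵥ (a x - b x)) μ)
    (hwv : ∫ x, k x * (a x ⬝ᵥ (a x - b x)) ∂μ = ∫ x, b x ⬝ᵥ (a x - b x) ∂μ) :
    ∫ x, (a x - b x) ⬝ᵥ (a x - b x) ∂μ = ∫ x, (1 - k x) * (a x ⬝ᵥ (a x - b x)) ∂μ := by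
  have hac : Integrable (fun x => a x ⬝ᵥ (a x - b x)) μ :=
    integrable_dotProduct_of_sqrt_le ha (ha.sub hb) haε hcc
  have hbc : Integrable (fun x => b x ⬝ᵥ (a x - b x)) μ :=
    (hac.sub hcc).congr (ae_of_all _ fun x => by simp only [Pi.sub_apply, sub_dotProduct]; ring)
  calc ∫ x, (a x - b x) ⬝ᵥ (a x - b x) ∂μ
      = ∫ x, (a x ⬝ᵥ (a x - b x) - b x ⬝ᵥ (a x - b x)) ∂μ := by simp only [sub_dotProduct]
    _ = ∫ x, a x ⬝ᵥ (a x - b x) ∂μ - ∫ x, k x * (a x ⬝ᵥ (a x - b x)) ∂μ := by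
      rw [integral_sub hac hbc, hwv]
    _ = ∫ x, (1 - k x) * (a x ⬝ᵥ (a x - b x)) ∂μ := by
      rw [← integral_sub hac (hac.bdd_mul hk hk1)]
      simp only [sub_mul, one_mul]

lemma sqrt_integral_dotProduct_sub_self_le [IsFiniteMeasure μ] (hε : 0 ≤ ε) (hδ : 0 ≤ δ)
    (ha : AEStronglyMeasurable a μ) (hb : AEStronglyMeasurable b μ)
    (hk : AEStronglyMeasurable k μ) (h1k : ∀ᵐ x ∂μ, ‖1 - k x‖ ≤ δ)
    (haε : ∀ᵐ x ∂μ, √(a x ⬝ᵥ a x) ≤ ε)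
    (hcc : Integrable (fun x => (a x - b x) ⬝ᵥ (a x - b x)) μ)
    (heq : ∫ x, (a x - b x) ⬝ᵥ (a x - b x) ∂μ = ∫ x, (1 - k x) * (a x ⬝ᵥ (a x - b x)) ∂μ) :
    √(∫ x, (a x - b x) ⬝ᵥ (a x - b x) ∂μ) ≤ δ * ε * √(μ.real Set.univ) := by
  have hac : Integrable (fun x => a x ⬝ᵥ (a x - b x)) μ :=
    integrable_dotProduct_of_sqrt_le ha (ha.sub hb) haε hcc
  have hn := memLp_sqrt_dotProduct_self (ha.sub hb) hcc
  refine Real.sqrt_le_of_le_mul_sqrt (by positivity) ?_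
  calc ∫ x, (a x - b x) ⬝ᵥ (a x - b x) ∂μ
      = ∫ x, (1 - k x) * (a x ⬝ᵥ (a x - b x)) ∂μ := heq
    _ ≤ ∫ x, δ * ε * √((a x - b x) ⬝ᵥ (a x - b x)) ∂μ := by
      refine integral_mono_ae (hac.bdd_mul (by fun_prop) h1k)
        ((hn.integrable one_le_two).const_mul _) ?_
      filter_upwards [h1k, haε] with x hkx hx
      calc (1 - k x) * (a x ⬝ᵥ (a x - b x)) ≤ |1 - k x| * |a x ⬝ᵥ (a x - b x)| := by
            rw [← abs_mul]; exact le_abs_self _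
        _ ≤ δ * (ε * √((a x - b x) ⬝ᵥ (a x - b x))) := by
            gcongr
            · exact hkx
            · exact (abs_dotProduct_le_sqrt_mul_sqrt _ _).trans
                (mul_le_mul_of_nonneg_right hx (Real.sqrt_nonneg _))
        _ = δ * ε * √((a x - b x) ⬝ᵥ (a x - b x)) := by ring
    _ ≤ δ * ε * (√(∫ x, √((a x - b x) ⬝ᵥ (a x - b x)) ^ 2 ∂μ) * √(μ.real Set.univ)) := by
      rw [integral_const_mul]
      gcongr
      exact integral_le_sqrt_integral_sq_mul_sqrt_measureReal
        (ae_of_all _ fun _ => Real.sqrt_nonneg _) hn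
    _ = δ * ε * √(μ.real Set.univ) * √(∫ x, (a x - b x) ⬝ᵥ (a x - b x) ∂μ) := by
      simp only [Real.sq_sqrt (dotProduct_self_nonneg_real _)]
      ring

lemma ae_dotProduct_self_eq_zero_of_not_integrable [IsFiniteMeasure μ]
    (ha : AEStronglyMeasurable a μ) (hk : AEStronglyMeasurable k μ)
    (hk_pos : ∀ᵐ x ∂μ, 0 < k x) (hk1 : ∀ᵐ x ∂μ, ‖k x‖ ≤ 1)
    (haε : ∀ᵐ x ∂μ, √(a x ⬝ᵥ a x) ≤ ε)
    (hcc : ¬ Integrable (fun x => (a x - b x) ⬝ᵥ (a x - b x)) μ)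
    (hw : ∫ x, k x * (a x ⬝ᵥ a x) ∂μ = ∫ x, b x ⬝ᵥ a x ∂μ)
    (hv : ∫ x, k x * (a x ⬝ᵥ b x) ∂μ = ∫ x, b x ⬝ᵥ b x ∂μ)
    (hwv : ∫ x, k x * (a x ⬝ᵥ (a x - b x)) ∂μ = ∫ x, b x ⬝ᵥ (a x - b x) ∂μ) :
    ∀ᵐ x ∂μ, a x ⬝ᵥ a x = 0 := by
  have hkaa := (integrable_dotProduct_self_of_sqrt_le ha haε).bdd_mul hk hk1
  have hzero : ∫ x, k x * (a x ⬝ᵥ a x) ∂μ = 0 := by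
    by_cases hab : Integrable (fun x => a x ⬝ᵥ b x) μ
    · have hbb : ¬ Integrable (fun x => b x ⬝ᵥ b x) μ := fun hbb => hcc <|
        (((integrable_dotProduct_self_of_sqrt_le ha haε).sub (hab.const_mul 2)).add hbb).congr
          (ae_of_all _ fun x => by
            simp only [Pi.add_apply, Pi.sub_apply, dotProduct_sub, sub_dotProduct,
              dotProduct_comm (b x) (a x)]
            ring)
      have hbc : ¬ Integrable (fun x => b x ⬝ᵥ (a x - b x)) μ := fun hbc => hbb <|
        (hab.sub hbc).congr (ae_of_all _ fun x => by
          simp only [Pi.sub_apply, dotProduct_sub, dotProduct_comm (b x) (a x)]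
          ring)
      have hsplit : ∫ x, k x * (a x ⬝ᵥ (a x - b x)) ∂μ =
          ∫ x, k x * (a x ⬝ᵥ a x) ∂μ - ∫ x, k x * (a x ⬝ᵥ b x) ∂μ := by
        simp only [dotProduct_sub, mul_sub]
        exact integral_sub hkaa (hab.bdd_mul hk hk1)
      rw [hwv, hv, integral_undef hbc, integral_undef hbb] at hsplit
      linarith
    · rw [hw, integral_undef]
      simpa only [dotProduct_comm] using hab
  have hkaa0 : ∀ᵐ x ∂μ, k x * (a x ⬝ᵥ a x) = 0 :=
    (integral_eq_zero_iff_of_nonneg_ae (hk_pos.mono fun x hx =>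
      mul_nonneg hx.le (dotProduct_self_nonneg_real _)) hkaa).mp hzero
  filter_upwards [hkaa0, hk_pos] with x hx hkx
  exact (mul_eq_zero.mp hx).resolve_left hkx.ne'

theorem integral_dotProduct_sub_self_eq_and_sqrt_le [IsFiniteMeasure μ] (hε : 0 ≤ ε)
    (hδ : 0 ≤ δ) (ha : AEStronglyMeasurable a μ) (hb : AEStronglyMeasurable b μ)
    (hk : AEStronglyMeasurable k μ) (hk_pos : ∀ᵐ x ∂μ, 0 < k x) (hk_le : ∀ᵐ x ∂μ, k x ≤ 1)
    (h1k : ∀ᵐ x ∂μ, 1 - k x ≤ δ) (haε : ∀ᵐ x ∂μ, √(a x ⬝ᵥ a x) ≤ ε)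
    (hw : ∫ x, k x * (a x ⬝ᵥ a x) ∂μ = ∫ x, b x ⬝ᵥ a x ∂μ)
    (hv : ∫ x, k x * (a x ⬝ᵥ b x) ∂μ = ∫ x, b x ⬝ᵥ b x ∂μ)
    (hwv : ∫ x, k x * (a x ⬝ᵥ (a x - b x)) ∂μ = ∫ x, b x ⬝ᵥ (a x - b x) ∂μ) :
    (∫ x, (a x - b x) ⬝ᵥ (a x - b x) ∂μ = ∫ x, (1 - k x) * (a x ⬝ᵥ (a x - b x)) ∂μ) ∧
      √(∫ x, (a x - b x) ⬝ᵥ (a x - b x) ∂μ) ≤ δ * ε * √(μ.real Set.univ) := by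
  have hk1 : ∀ᵐ x ∂μ, ‖k x‖ ≤ 1 := by
    filter_upwards [hk_pos, hk_le] with x h0 h1
    rwa [Real.norm_of_nonneg h0.le]
  by_cases hcc : Integrable (fun x => (a x - b x) ⬝ᵥ (a x - b x)) μ
  · have heq := integral_dotProduct_sub_self_eq ha hb hk hk1 haε hcc hwv
    refine ⟨heq, sqrt_integral_dotProduct_sub_self_le hε hδ ha hb hk ?_ haε hcc heq⟩
    filter_upwards [hk_le, h1k] with x h1 h2
    rwa [Real.norm_of_nonneg (sub_nonneg.mpr h1)]
  · have ha0 := ae_dotProduct_self_eq_zero_of_not_integrable ha hk hk_pos hk1 haε hcc hw hv hwv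
    have hrhs : ∫ x, (1 - k x) * (a x ⬝ᵥ (a x - b x)) ∂μ = 0 := by
      refine integral_eq_zero_of_ae ?_
      filter_upwards [ha0] with x hx
      simp [dotProduct_self_eq_zero.mp hx]
    rw [integral_undef hcc, hrhs, Real.sqrt_zero]
    exact ⟨rfl, by positivity⟩

end EnergyEstimate

/-- Comparison of the prescribed mean curvature solution `w` with the Poisson solution `v`:
the energy identity `∫ |∇(w−v)|² = ∫ (1 − 1/√(1+|∇w|²)) ∇w·∇(w−v)` holds, and
`‖∇(w−v)‖_{L²} ≤ (ε³/2)|Ω|^{1/2}`. -/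
theorem poisson_approximation (Ω : Set (Fin 2 → ℝ)) (hΩ : IsOpen Ω)
    (hb : Bornology.IsBounded Ω) (ε : ℝ) (hε : 0 ≤ ε)
    (w v : (Fin 2 → ℝ) → ℝ) (p : (Fin 2 → ℝ) → ℝ)
    (hw : ContDiff ℝ 1 w) (hv : Differentiable ℝ v)
    (hw0 : ∀ x ∉ Ω, w x = 0) (hv0 : ∀ x ∉ Ω, v x = 0)
    (hgw : ∀ x ∈ Ω, Real.sqrt (grad w x ⬝ᵥ grad w x) ≤ ε)
    (hweakw : ∀ φ : (Fin 2 → ℝ) → ℝ, Differentiable ℝ φ → (∀ x ∉ Ω, φ x = 0) →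
      ∫ x in Ω, ((1 / Real.sqrt (1 + grad w x ⬝ᵥ grad w x)) • grad w x) ⬝ᵥ grad φ x =
        -∫ x in Ω, p x * φ x)
    (hweakv : ∀ φ : (Fin 2 → ℝ) → ℝ, Differentiable ℝ φ → (∀ x ∉ Ω, φ x = 0) →
      ∫ x in Ω, grad v x ⬝ᵥ grad φ x = -∫ x in Ω, p x * φ x) :
    (∫ x in Ω, (grad w x - grad v x) ⬝ᵥ (grad w x - grad v x) =
      ∫ x in Ω, (1 - 1 / Real.sqrt (1 + grad w x ⬝ᵥ grad w x)) *
        (grad w x ⬝ᵥ (grad w x - grad v x))) ∧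
    Real.sqrt (∫ x in Ω, (grad w x - grad v x) ⬝ᵥ (grad w x - grad v x)) ≤
      (ε ^ 3 / 2) * Real.sqrt (volume Ω).toReal := by
  have : IsFiniteMeasure (volume.restrict Ω) := isFiniteMeasure_restrict.mpr hb.measure_lt_top.ne
  have hwd : Differentiable ℝ w := hw.differentiable one_ne_zero
  have hgrad_w := measurable_grad w
  have hgwε : ∀ᵐ x ∂volume.restrict Ω, √(grad w x ⬝ᵥ grad w x) ≤ ε :=
    ae_restrict_of_forall_mem hΩ.measurableSet hgw
  have hweight : ∀ᵐ x ∂volume.restrict Ω, 1 - 1 / √(1 + grad w x ⬝ᵥ grad w x) ≤ ε ^ 2 / 2 := by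
    filter_upwards [hgwε] with x hx
    exact (Real.one_sub_one_div_sqrt_one_add_le (dotProduct_self_nonneg_real _)).trans
      (by linarith [(Real.sqrt_le_iff.mp hx).2])
  have hweak (φ : (Fin 2 → ℝ) → ℝ) (hφ : Differentiable ℝ φ) (hφ0 : ∀ x ∉ Ω, φ x = 0) :
      ∫ x in Ω, 1 / √(1 + grad w x ⬝ᵥ grad w x) * (grad w x ⬝ᵥ grad φ x) =
        ∫ x in Ω, grad v x ⬝ᵥ grad φ x := by
    simpa only [smul_dotProduct, smul_eq_mul] using
      (hweakw φ hφ hφ0).trans (hweakv φ hφ hφ0).symm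
  have hwv := hweak (w - v) (hwd.sub hv) fun x hx => by simp [hw0 x hx, hv0 x hx]
  simp only [grad_sub hwd hv] at hwv
  obtain ⟨heq, hle⟩ := integral_dotProduct_sub_self_eq_and_sqrt_le hε (by positivity)
    hgrad_w.aestronglyMeasurable (measurable_grad v).aestronglyMeasurable
    (by fun_prop : Measurable fun x => 1 / √(1 + grad w x ⬝ᵥ grad w x)).aestronglyMeasurable
    (ae_of_all _ fun x => by have := dotProduct_self_nonneg_real (grad w x); positivity)
    (ae_of_all _ fun x => Real.one_div_sqrt_one_add_le_one (dotProduct_self_nonneg_real _))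
    hweight hgwε (hweak w hwd hw0) (hweak v hv hv0) hwv
  refine ⟨heq, hle.trans_eq ?_⟩
  rw [measureReal_restrict_apply_univ, measureReal_def]
  ring
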